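/- arXiv:2112.10448 — 6 statements merged into one kernel-verified Lean document; each statement's English description precedes it below -/
import Mathlib

section
/- Let z ∈ ℝⁿ, let v ∈ K[Ψ](z) (the Krasovskii regularization of the quantization error Ψ evaluated at z), and let S₁ ∈ D^n_+ be diagonal positive definite. Then vᵀ S₁ v − Δᵀ S₁ Δ ≤ 0. -/
open MeasureTheory Set Filter Matrix

noncomputable section

/-- The componentwise uniform quantizer `q_i(x) = δ_i sign(x_i) ⌊|x_i| / δ_i⌋`. -/
def quantizer {n : ℕ} (δ : Fin n → ℝ) (x : EuclideanSpace ℝ (Fin n)) :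
    EuclideanSpace ℝ (Fin n) :=
  WithLp.toLp 2 (fun i => δ i * Real.sign (x i) * (⌊|x i| / δ i⌋ : ℤ))

/-- The quantization error `Ψ(x) = q(x) - x`. -/
def qerr {n : ℕ} (δ : Fin n → ℝ) (x : EuclideanSpace ℝ (Fin n)) :
    EuclideanSpace ℝ (Fin n) :=
  quantizer δ x - x
/-- The Krasovskii regularization `K[X](x) = ⋂_{δ > 0} closure (co (X (x + δ𝔹)))`. -/
def kras {n : ℕ} (X : EuclideanSpace ℝ (Fin n) → EuclideanSpace ℝ (Fin n))
    (x : EuclideanSpace ℝ (Fin n)) : Set (EuclideanSpace ℝ (Fin n)) :=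
  ⋂ δ > (0:ℝ), closure (convexHull ℝ (X '' Metric.closedBall x δ))

lemma qerr_abs_le {n : ℕ} (δ : Fin n → ℝ) (hδ : ∀ i, 0 < δ i)
    (x : EuclideanSpace ℝ (Fin n)) (i : Fin n) : |qerr δ x i| ≤ δ i := by
  have hδi := hδ i
  have hx : Real.sign (x i) * |x i| = x i := by
    rcases lt_trichotomy (x i) 0 with h | h | h
    · rw [Real.sign_of_neg h, abs_of_neg h]; ring
    · simp [h]
    · rw [Real.sign_of_pos h, abs_of_pos h]; ring
  set t : ℝ := |x i| / δ i with ht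
  have habs : |x i| = δ i * t := by rw [ht]; field_simp [hδi.ne']
  have : qerr δ x i = Real.sign (x i) * (δ i * ((⌊t⌋ : ℝ) - t)) := by
    have h0 : qerr δ x i = δ i * Real.sign (x i) * (⌊t⌋ : ℝ) - x i := by rw [ht]; simp [qerr, quantizer]
    rw [h0]
    nth_rewrite 2 [← hx]
    rw [habs]; ring
  rw [this, abs_mul, abs_mul]
  have hs : |Real.sign (x i)| ≤ 1 := by
    rcases Real.sign_apply_eq (x i) with h | h | h <;> simp [h]
  have hfr : |(⌊t⌋ : ℝ) - t| ≤ 1 := by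
    rw [abs_sub_comm, abs_of_nonneg (by linarith [Int.floor_le t])]
    linarith [Int.lt_floor_add_one t]
  have h1 : |δ i| * |(⌊t⌋ : ℝ) - t| ≤ δ i := by
    rw [abs_of_pos hδi]
    calc δ i * |(⌊t⌋ : ℝ) - t| ≤ δ i * 1 := by
          exact mul_le_mul_of_nonneg_left hfr hδi.le
      _ = δ i := mul_one _
  calc |Real.sign (x i)| * (|δ i| * |(⌊t⌋ : ℝ) - t|) ≤ 1 * δ i := by
        exact mul_le_mul hs h1 (by positivity) one_pos.le
    _ = δ i := one_mul _

/-- Boundedness sector condition for the Krasovskii regularization of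
the quantization error: if `v ∈ K[Ψ](z)` and `S₁` is diagonal positive definite, then
`vᵀ S₁ v - Δᵀ S₁ Δ ≤ 0`. -/
theorem kras_qerr_sector_bound {n : ℕ} (δ : Fin n → ℝ) (hδ : ∀ i, 0 < δ i)
    (S₁ : Matrix (Fin n) (Fin n) ℝ) (hdiag : S₁.IsDiag) (hpd : S₁.PosDef)
    (z v : EuclideanSpace ℝ (Fin n)) (hv : v ∈ kras (qerr δ) z) :
    v ⬝ᵥ S₁.mulVec v - δ ⬝ᵥ S₁.mulVec δ ≤ 0 := by
  set K : Set (EuclideanSpace ℝ (Fin n)) := {w | ∀ i, |w i| ≤ δ i} with hK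
  have hKconv : Convex ℝ K := by
    intro a ha b hb p q hp hq hpq
    intro i
    have : (p • a + q • b) i = p * a i + q * b i := rfl
    rw [this]
    calc |p * a i + q * b i| ≤ |p * a i| + |q * b i| := abs_add_le _ _
      _ = p * |a i| + q * |b i| := by rw [abs_mul, abs_mul, abs_of_nonneg hp, abs_of_nonneg hq]
      _ ≤ p * δ i + q * δ i := by gcongr; exacts [ha i, hb i]
      _ = δ i := by rw [← add_mul, hpq, one_mul]
  have hKclosed : IsClosed K := by
    have : K = ⋂ i, (fun w : EuclideanSpace ℝ (Fin n) => w i) ⁻¹' {y | |y| ≤ δ i} := by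
      ext w; simp [hK]
    rw [this]
    refine isClosed_iInter fun i => IsClosed.preimage ?_ ?_
    · exact (EuclideanSpace.proj i).continuous
    · exact isClosed_le (continuous_abs) continuous_const
  have hvK : v ∈ K := by
    have h1 : v ∈ closure (convexHull ℝ (qerr δ '' Metric.closedBall z 1)) := by
      have := Set.mem_iInter₂.mp hv 1 one_pos
      exact this
    have hsub : qerr δ '' Metric.closedBall z 1 ⊆ K := by
      rintro w ⟨x, -, rfl⟩ i
      exact qerr_abs_le δ hδ x i
    exact closure_minimal (convexHull_min hsub hKconv) hKclosed h1
  have key : ∀ w : Fin n → ℝ, w ⬝ᵥ S₁.mulVec w = ∑ i, S₁ i i * w i ^ 2 := by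
    intro w
    unfold dotProduct Matrix.mulVec
    refine Finset.sum_congr rfl fun i _ => ?_
    rw [show (fun j => S₁ i j) ⬝ᵥ w = ∑ j, S₁ i j * w j from rfl,
      Finset.sum_eq_single i (fun j _ hji => by rw [hdiag (Ne.symm hji), zero_mul])
      (by simp)]
    ring
  have hdiagpos : ∀ i, 0 < S₁ i i := fun i => by
    have h := hpd.dotProduct_mulVec_pos (x := Pi.single i 1) (by
      intro h; have := congrFun h i; simp at this)
    simpa [Matrix.mulVec_single, dotProduct_single] using h
  rw [key v, key δ, sub_nonpos]
  refine Finset.sum_le_sum fun i _ => ?_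
  have : v i ^ 2 ≤ δ i ^ 2 := by
    rw [← sq_abs (v i), ← sq_abs (δ i)]
    exact pow_le_pow_left₀ (abs_nonneg _) (by rw [abs_of_pos (hδ i)]; exact hvK i) 2
  exact mul_le_mul_of_nonneg_left this (hdiagpos i).le

end
end

section
/- Let z ∈ ℝⁿ, let v ∈ K[Ψ](z) (the Krasovskii regularization of the quantization error Ψ evaluated at z), and let S₂ ∈ D^n_+ be diagonal positive definite. Then vᵀ S₂ (v + z) ≤ 0. -/
open MeasureTheory Set Filter Matrix

noncomputable section

-- helper: scalar quantizer bounds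
lemma quant_scalar (d a : ℝ) (hd : 0 < d) :
    (d * Real.sign a * (⌊|a| / d⌋ : ℤ) - a) * (d * Real.sign a * (⌊|a| / d⌋ : ℤ)) ≤ 0 ∧
    |d * Real.sign a * (⌊|a| / d⌋ : ℤ) - a| ≤ d := by
  rcases lt_trichotomy a 0 with ha | ha | ha
  · rw [Real.sign_of_neg ha, abs_of_neg ha]
    set k : ℝ := ((⌊-a / d⌋ : ℤ) : ℝ) with hk
    have h1 : k ≤ -a / d := Int.floor_le _
    have h2 : -a / d - 1 < k := Int.sub_one_lt_floor _
    have h3 : (0:ℝ) ≤ k := by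
      rw [hk]
      have : (0:ℤ) ≤ ⌊-a / d⌋ := Int.floor_nonneg.2 (div_nonneg (by linarith) hd.le)
      exact_mod_cast this
    have h1' : k * d ≤ -a := by rwa [← le_div_iff₀ hd]
    have h2' : -a - d < k * d := by
      have := (div_lt_iff₀ hd).1 (by linarith : -a / d < k + 1)
      linarith
    constructor
    · have hQ : d * (-1) * k ≤ 0 := by nlinarith
      have hψ : 0 ≤ d * (-1) * k - a := by nlinarith
      exact mul_nonpos_of_nonneg_of_nonpos hψ hQ
    · rw [abs_le]; constructor <;> nlinarith
  · subst ha; simp [hd.le]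
  · rw [Real.sign_of_pos ha, abs_of_pos ha]
    set k : ℝ := ((⌊a / d⌋ : ℤ) : ℝ) with hk
    have h1 : k ≤ a / d := Int.floor_le _
    have h2 : a / d - 1 < k := Int.sub_one_lt_floor _
    have h3 : (0:ℝ) ≤ k := by
      rw [hk]
      have : (0:ℤ) ≤ ⌊a / d⌋ := Int.floor_nonneg.2 (div_nonneg ha.le hd.le)
      exact_mod_cast this
    have h1' : k * d ≤ a := by rwa [← le_div_iff₀ hd]
    have h2' : a - d < k * d := by
      have := (div_lt_iff₀ hd).1 (by linarith : a / d < k + 1)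
      linarith
    constructor
    · have hQ : 0 ≤ d * 1 * k := by nlinarith
      have hψ : d * 1 * k - a ≤ 0 := by nlinarith
      exact mul_nonpos_of_nonpos_of_nonneg hψ hQ
    · rw [abs_le]; constructor <;> nlinarith

lemma coord_le_norm {n : ℕ} (y : EuclideanSpace ℝ (Fin n)) (i : Fin n) : |y i| ≤ ‖y‖ := by
  rw [EuclideanSpace.norm_eq, ← Real.sqrt_sq_eq_abs]
  apply Real.sqrt_le_sqrt
  have : y i ^ 2 = ‖y i‖ ^ 2 := by rw [Real.norm_eq_abs, sq_abs]
  rw [this]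
  exact Finset.single_le_sum (f := fun j => ‖y j‖ ^ 2) (fun j _ => by positivity) (Finset.mem_univ i)

/-- Deadzone sector condition for the Krasovskii regularization of the
quantization error: if `v ∈ K[Ψ](z)` and `S₂` is diagonal positive definite, then
`vᵀ S₂ (v + z) ≤ 0`. -/
theorem kras_qerr_deadzone_sector {n : ℕ} (δ : Fin n → ℝ) (hδ : ∀ i, 0 < δ i)
    (S₂ : Matrix (Fin n) (Fin n) ℝ) (hdiag : S₂.IsDiag) (hpd : S₂.PosDef)
    (z v : EuclideanSpace ℝ (Fin n)) (hv : v ∈ kras (qerr δ) z) :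
    v ⬝ᵥ S₂.mulVec (v + z) ≤ 0 := by
  set s : Fin n → ℝ := fun i => S₂ i i with hs
  have hspos : ∀ i, 0 < s i := by
    intro i
    have h0 : (Pi.single i 1 : Fin n → ℝ) ≠ 0 := by
      intro h
      have := congrFun h i
      simp at this
    have := hpd.dotProduct_mulVec_pos h0
    simpa [Matrix.mulVec_single, dotProduct, Pi.single_apply] using this
  set F : EuclideanSpace ℝ (Fin n) → ℝ :=
    fun w => ∑ i, s i * (w i * (w i + z i)) with hF
  -- rewrite the goal
  have hgoal : v ⬝ᵥ S₂.mulVec (v + z) = F v := by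
    rw [hF]
    simp only [dotProduct, Matrix.mulVec]
    refine Finset.sum_congr rfl fun i _ => ?_
    have : (∑ j, S₂ i j * (v + z) j) = S₂ i i * ((v + z) i) := by
      refine Finset.sum_eq_single i (fun j _ hj => ?_) (by simp)
      rw [hdiag (Ne.symm hj), zero_mul]
    rw [← WithLp.ofLp_add, this]
    have hvz : (v + z) i = v i + z i := rfl
    rw [hvz]; ring
  rw [hgoal]
  set C : ℝ := ∑ i, s i * δ i with hC
  have hC0 : 0 ≤ C :=
    Finset.sum_nonneg fun i _ => mul_nonneg (hspos i).le (hδ i).le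
  -- key estimate for each radius d
  have key : ∀ d : ℝ, 0 < d → F v ≤ C * d := by
    intro d hd
    set T : Set (EuclideanSpace ℝ (Fin n)) := {w | F w ≤ C * d} with hT
    have hFc : Continuous F := by
      apply continuous_finset_sum
      intro i _
      have hp : Continuous fun w : EuclideanSpace ℝ (Fin n) => w i :=
        (EuclideanSpace.proj i).continuous
      exact continuous_const.mul (hp.mul (hp.add continuous_const))
    have hTclosed : IsClosed T := isClosed_le hFc continuous_const
    have hTconv : Convex ℝ T := by
      intro x hx y hy a b ha hb hab
      simp only [hT, mem_setOf_eq] at hx hy ⊢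
      have hterm : ∀ i ∈ Finset.univ,
          s i * ((a • x + b • y) i * ((a • x + b • y) i + z i)) ≤
            a * (s i * (x i * (x i + z i))) + b * (s i * (y i * (y i + z i))) := by
        intro i _
        have hco : (a • x + b • y) i = a * x i + b * y i := rfl
        rw [hco]
        have hb' : b = 1 - a := by linarith
        subst hb'
        nlinarith [mul_nonneg (mul_nonneg (hspos i).le (mul_nonneg ha hb))
          (sq_nonneg (x i - y i))]
      calc F (a • x + b • y) ≤ ∑ i, (a * (s i * (x i * (x i + z i)))
              + b * (s i * (y i * (y i + z i)))) := Finset.sum_le_sum hterm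
        _ = a * F x + b * F y := by
            rw [hF, Finset.sum_add_distrib, Finset.mul_sum, Finset.mul_sum]
        _ ≤ a * (C * d) + b * (C * d) :=
            add_le_add (mul_le_mul_of_nonneg_left hx ha) (mul_le_mul_of_nonneg_left hy hb)
        _ = C * d := by rw [← add_mul, hab, one_mul]
    have himg : qerr δ '' Metric.closedBall z d ⊆ T := by
      rintro _ ⟨x, hx, rfl⟩
      simp only [hT, mem_setOf_eq, hF, hC, Finset.sum_mul]
      refine Finset.sum_le_sum fun i _ => ?_
      have hψ : qerr δ x i = δ i * Real.sign (x i) * (⌊|x i| / δ i⌋ : ℤ) - x i := rfl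
      obtain ⟨hq1, hq2⟩ := quant_scalar (δ i) (x i) (hδ i)
      have hzx : |x i - z i| ≤ d := by
        have h1 : |(x - z) i| ≤ ‖x - z‖ := coord_le_norm (x - z) i
        have h2 : (x - z) i = x i - z i := rfl
        rw [h2] at h1
        exact h1.trans (by rwa [Metric.mem_closedBall, dist_eq_norm] at hx)
      set ψ : ℝ := δ i * Real.sign (x i) * (⌊|x i| / δ i⌋ : ℤ) - x i with hψdef
      rw [hψ]
      have hq1' : ψ * (ψ + x i) ≤ 0 := by
        have : δ i * Real.sign (x i) * (⌊|x i| / δ i⌋ : ℤ) = ψ + x i := by rw [hψdef]; ring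
        rw [this] at hq1; linarith [hq1]
      obtain ⟨hl, hr⟩ := abs_le.1 hq2
      obtain ⟨hl2, hr2⟩ := abs_le.1 hzx
      have hbound : ψ * (ψ + z i) ≤ δ i * d := by
        have habs : |ψ * (x i - z i)| ≤ δ i * d := by
          rw [abs_mul]
          exact mul_le_mul hq2 hzx (abs_nonneg _) (hδ i).le
        have hprod : -(δ i * d) ≤ ψ * (x i - z i) := neg_le_of_abs_le habs
        nlinarith [hq1', hprod]
      calc s i * (ψ * (ψ + z i)) ≤ s i * (δ i * d) :=
            mul_le_mul_of_nonneg_left hbound (hspos i).le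
        _ = s i * δ i * d := by ring
    have hsub : closure (convexHull ℝ (qerr δ '' Metric.closedBall z d)) ⊆ T :=
      closure_minimal (convexHull_min himg hTconv) hTclosed
    have hvd : v ∈ closure (convexHull ℝ (qerr δ '' Metric.closedBall z d)) := by
      have := mem_iInter.1 (hv) d
      exact mem_iInter.1 this hd
    exact hsub hvd
  -- conclude
  have : ∀ ε : ℝ, 0 < ε → F v ≤ 0 + ε := by
    intro ε hε
    have hd : (0:ℝ) < ε / (C + 1) := by positivity
    have h1 := key _ hd
    have h2 : C * (ε / (C + 1)) ≤ ε := by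
      rw [mul_div_assoc', div_le_iff₀ (by positivity)]
      nlinarith
    linarith
  exact le_of_forall_pos_le_add this

end
end

section
/- Let P ∈ S^n_+, S₁, S₂ ∈ D^n_+, K ∈ ℝ^{m×n}, τ > 0, A ∈ ℝ^{n×n}, B ∈ ℝ^{n×m}. The symmetric 2n×2n block matrix [[ (A+BK)ᵀP + P(A+BK) + τP , P B K − S₂ ], [ (P B K − S₂)ᵀ , −S₁ − 2S₂ ]] is negative definite if and only if there exist matrices X₁, X₂ ∈ ℝ^{n×n} such that the symmetric 3n×3n block matrix with blocks M₁₁ = −(X₁ + X₁ᵀ), M₁₂ = P − X₂ + X₁ᵀ(A+BK), M₁₃ = X₁ᵀ B K, M₂₂ = X₂ᵀ(A+BK) + (A+BK)ᵀX₂ + τP, M₂₃ = X₂ᵀ B K − S₂, M₃₃ = −S₁ − 2S₂ (and symmetric lower blocks) is negative definite. -/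
open Matrix

noncomputable section

set_option linter.unusedSectionVars false

section Aux
variable {p q : Type*} [Fintype p] [Fintype q] [DecidableEq p] [DecidableEq q]

/-- congruence preserves positive definiteness (real case). -/
theorem posDef_conj_of_injective {M : Matrix p p ℝ} (hM : M.PosDef) (U : Matrix p q ℝ)
    (hU : Function.Injective U.mulVec) : (Uᵀ * M * U).PosDef := by
  have hMt : Mᵀ = M := by
    rw [← conjTranspose_eq_transpose_of_trivial]; exact hM.1.eq
  rw [posDef_iff_dotProduct_mulVec]
  constructor
  · show (Uᵀ * M * U)ᴴ = _
    rw [conjTranspose_eq_transpose_of_trivial, transpose_mul, transpose_mul,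
      transpose_transpose, hMt, Matrix.mul_assoc]
  · intro x hx
    have hUx : U *ᵥ x ≠ 0 := fun h => hx (hU (by simpa using h))
    have := hM.dotProduct_mulVec_pos hUx
    simpa [← Matrix.mulVec_mulVec, Matrix.dotProduct_mulVec, Matrix.vecMul_transpose,
      Matrix.mul_assoc] using this

theorem posDef_smul_one {c : ℝ} (hc : 0 < c) : ((c • 1 : Matrix p p ℝ)).PosDef := by
  rw [posDef_iff_dotProduct_mulVec]
  constructor
  · simp [Matrix.IsHermitian, conjTranspose_smul]
  · intro x hx
    have : (0:ℝ) < x ⬝ᵥ x :=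
      lt_of_le_of_ne (Finset.sum_nonneg fun i _ => mul_self_nonneg _)
        (Ne.symm ((dotProduct_self_eq_zero (v := x)).not.mpr hx))
    simpa [Matrix.smul_mulVec, dotProduct_smul] using mul_pos hc this

theorem posDef_fromBlocks₁₁' {A : Matrix p p ℝ} (B : Matrix p q ℝ) (D : Matrix q q ℝ)
    (hA : A.PosDef) [Invertible A] :
    (fromBlocks A B Bᵀ D).PosDef ↔ (D - Bᵀ * A⁻¹ * B).PosDef := by
  have hB : Bᵀ = Bᴴ := (conjTranspose_eq_transpose_of_trivial B).symm
  rw [hB]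
  constructor
  · intro h
    refine Matrix.PosDef.of_dotProduct_mulVec_pos ((Matrix.IsHermitian.fromBlocks₁₁ B D hA.1).mp h.1) fun x hx => ?_
    have hz : (-((A⁻¹ * B) *ᵥ x) ⊕ᵥ x) ≠ 0 := fun h0 => hx (funext fun i => congrFun h0 (Sum.inr i))
    have := h.dotProduct_mulVec_pos hz
    rw [Matrix.dotProduct_mulVec, Matrix.schur_complement_eq₁₁ B D _ _ hA.1, neg_add_cancel,
      dotProduct_zero, zero_add, ← Matrix.dotProduct_mulVec] at this
    exact this
  · intro h
    refine Matrix.PosDef.of_dotProduct_mulVec_pos ((Matrix.IsHermitian.fromBlocks₁₁ B D hA.1).mpr h.1) fun x hx => ?_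
    rw [Matrix.dotProduct_mulVec, ← Sum.elim_comp_inl_inr x,
      Matrix.schur_complement_eq₁₁ B D _ _ hA.1]
    by_cases hy : x ∘ Sum.inr = 0
    · have hx1 : x ∘ Sum.inl + (A⁻¹ * B) *ᵥ (x ∘ Sum.inr) ≠ 0 := by
        rw [hy]
        simpa using fun h0 => hx (by
          rw [← Sum.elim_comp_inl_inr x, h0, hy]; ext (i | i) <;> rfl)
      have h1 := hA.dotProduct_mulVec_pos hx1
      rw [Matrix.dotProduct_mulVec] at h1
      have h2 : star (x ∘ Sum.inr) ᵥ* (D - Bᴴ * A⁻¹ * B) ⬝ᵥ (x ∘ Sum.inr) = 0 := by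
        rw [hy]; simp
      rw [h2]
      simpa using h1
    · have h1 := (hA.posSemidef).dotProduct_mulVec_nonneg (x ∘ Sum.inl + (A⁻¹ * B) *ᵥ (x ∘ Sum.inr))
      rw [Matrix.dotProduct_mulVec] at h1
      have h2 := h.dotProduct_mulVec_pos hy
      rw [Matrix.dotProduct_mulVec] at h2
      exact add_pos_of_nonneg_of_pos h1 h2

theorem posDef_fromBlocks₂₂' (A : Matrix p p ℝ) (B : Matrix p q ℝ) {D : Matrix q q ℝ}
    (hD : D.PosDef) [Invertible D] :
    (fromBlocks A B Bᵀ D).PosDef ↔ (A - B * D⁻¹ * Bᵀ).PosDef := by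
  have hB : Bᵀ = Bᴴ := (conjTranspose_eq_transpose_of_trivial B).symm
  rw [hB]
  constructor
  · intro h
    refine Matrix.PosDef.of_dotProduct_mulVec_pos ((Matrix.IsHermitian.fromBlocks₂₂ A B hD.1).mp h.1) fun x hx => ?_
    have hz : (x ⊕ᵥ -((D⁻¹ * Bᴴ) *ᵥ x)) ≠ 0 := fun h0 => hx (funext fun i => congrFun h0 (Sum.inl i))
    have := h.dotProduct_mulVec_pos hz
    rw [Matrix.dotProduct_mulVec, Matrix.schur_complement_eq₂₂ A B _ _ hD.1, add_neg_cancel,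
      dotProduct_zero, zero_add, ← Matrix.dotProduct_mulVec] at this
    exact this
  · intro h
    refine Matrix.PosDef.of_dotProduct_mulVec_pos ((Matrix.IsHermitian.fromBlocks₂₂ A B hD.1).mpr h.1) fun x hx => ?_
    rw [Matrix.dotProduct_mulVec, ← Sum.elim_comp_inl_inr x,
      Matrix.schur_complement_eq₂₂ A B _ _ hD.1]
    by_cases hy : x ∘ Sum.inl = 0
    · have hx1 : (D⁻¹ * Bᴴ) *ᵥ (x ∘ Sum.inl) + x ∘ Sum.inr ≠ 0 := by
        rw [hy]
        simpa using fun h0 => hx (by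
          rw [← Sum.elim_comp_inl_inr x, h0, hy]; ext (i | i) <;> rfl)
      have h1 := hD.dotProduct_mulVec_pos hx1
      rw [Matrix.dotProduct_mulVec] at h1
      have h2 : star (x ∘ Sum.inl) ᵥ* (A - B * D⁻¹ * Bᴴ) ⬝ᵥ (x ∘ Sum.inl) = 0 := by
        rw [hy]; simp
      rw [h2]
      simpa using h1
    · have h1 := (hD.posSemidef).dotProduct_mulVec_nonneg ((D⁻¹ * Bᴴ) *ᵥ (x ∘ Sum.inl) + x ∘ Sum.inr)
      rw [Matrix.dotProduct_mulVec] at h1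
      have h2 := h.dotProduct_mulVec_pos hy
      rw [Matrix.dotProduct_mulVec] at h2
      exact add_pos_of_nonneg_of_pos h1 h2

theorem quad_form_le (R : Matrix p p ℝ) (x : p → ℝ) :
    x ⬝ᵥ R *ᵥ x ≤ (∑ i, ∑ j, |R i j|) * (x ⬝ᵥ x) := by
  have key : ∀ i j : p, |x i * x j| ≤ x ⬝ᵥ x := by
    intro i j
    have h1 : x i * x i ≤ x ⬝ᵥ x := by
      simp only [dotProduct]
      exact Finset.single_le_sum (f := fun k => x k * x k)
        (fun k _ => mul_self_nonneg _) (Finset.mem_univ i)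
    have h2 : x j * x j ≤ x ⬝ᵥ x := by
      simp only [dotProduct]
      exact Finset.single_le_sum (f := fun k => x k * x k)
        (fun k _ => mul_self_nonneg _) (Finset.mem_univ j)
    rw [abs_mul]
    have e1 : |x i| * |x i| = x i * x i := abs_mul_abs_self (x i)
    have e2 : |x j| * |x j| = x j * x j := abs_mul_abs_self (x j)
    nlinarith [sq_nonneg (|x i| - |x j|), abs_nonneg (x i), abs_nonneg (x j)]
  have expand : x ⬝ᵥ R *ᵥ x = ∑ i, ∑ j, x i * (R i j * x j) := by
    simp [dotProduct, Matrix.mulVec, Finset.mul_sum]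
  rw [expand]
  calc ∑ i, ∑ j, x i * (R i j * x j) ≤ ∑ i, ∑ j, |R i j| * (x ⬝ᵥ x) := by
        refine Finset.sum_le_sum fun i _ => Finset.sum_le_sum fun j _ => ?_
        refine le_trans (le_abs_self _) ?_
        rw [show x i * (R i j * x j) = R i j * (x i * x j) by ring, abs_mul]
        exact mul_le_mul_of_nonneg_left (key i j) (abs_nonneg _)
    _ = (∑ i, ∑ j, |R i j|) * (x ⬝ᵥ x) := by
        simp [Finset.sum_mul]


theorem fromRows_add2 {m₁ m₂ n' : Type*} (A C : Matrix m₁ n' ℝ) (B D : Matrix m₂ n' ℝ) :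
    fromRows A B + fromRows C D = fromRows (A + C) (B + D) := by
  ext (i | i) j <;> rfl

theorem fromColumns_add2 {m' n₁ n₂ : Type*} (A C : Matrix m' n₁ ℝ) (B D : Matrix m' n₂ ℝ) :
    fromCols A B + fromCols C D = fromCols (A + C) (B + D) := by
  ext i (j | j) <;> rfl

theorem smul_fromColumns' {m n₁ n₂ : Type*} (c : ℝ) (A : Matrix m n₁ ℝ) (B : Matrix m n₂ ℝ) :
    fromCols (c • A) (c • B) = c • fromCols A B := by
  ext i (j | j) <;> rfl

theorem smul_one_invertible {c : ℝ} (hc : c ≠ 0) :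
    ((c • 1 : Matrix p p ℝ)) * ((c⁻¹ • 1 : Matrix p p ℝ)) = 1 := by
  rw [Matrix.smul_mul, Matrix.mul_smul, Matrix.one_mul, smul_smul, mul_inv_cancel₀ hc, one_smul]

theorem smul_one_inv {c : ℝ} (hc : c ≠ 0) :
    ((c • 1 : Matrix p p ℝ))⁻¹ = (c⁻¹ • 1 : Matrix p p ℝ) :=
  Matrix.inv_eq_right_inv (smul_one_invertible hc)

end Aux

/-- Projection-lemma reformulation: the 2×2-block matrix inequality
`[[(A+BK)ᵀP + P(A+BK) + τP, PBK - S₂], [(PBK - S₂)ᵀ, -S₁ - 2S₂]] < 0` holds if and only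
if there exist slack matrices `X₁, X₂` making the corresponding 3×3-block matrix
negative definite. -/
theorem projection_lemma_equivalence {n m : ℕ}
    (A : Matrix (Fin n) (Fin n) ℝ) (B : Matrix (Fin n) (Fin m) ℝ)
    (K : Matrix (Fin m) (Fin n) ℝ)
    (P S₁ S₂ : Matrix (Fin n) (Fin n) ℝ) (τ : ℝ) (hτ : 0 < τ)
    (hP : P.PosDef) (hS₁d : S₁.IsDiag) (hS₁ : S₁.PosDef)
    (hS₂d : S₂.IsDiag) (hS₂ : S₂.PosDef) :
    (-(Matrix.fromBlocks
        ((A + B * K)ᵀ * P + P * (A + B * K) + τ • P) (P * B * K - S₂)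
        (P * B * K - S₂)ᵀ (-S₁ - 2 • S₂))).PosDef ↔
    ∃ X₁ X₂ : Matrix (Fin n) (Fin n) ℝ,
      (-(Matrix.fromBlocks
          (-(X₁ + X₁ᵀ))
          (Matrix.fromCols (P - X₂ + X₁ᵀ * (A + B * K)) (X₁ᵀ * (B * K)))
          (Matrix.fromRows (P - X₂ + X₁ᵀ * (A + B * K))ᵀ (X₁ᵀ * (B * K))ᵀ)
          (Matrix.fromBlocks
            (X₂ᵀ * (A + B * K) + (A + B * K)ᵀ * X₂ + τ • P) (X₂ᵀ * (B * K) - S₂)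
            (X₂ᵀ * (B * K) - S₂)ᵀ (-S₁ - 2 • S₂)))).PosDef := by
  have hPt : Pᵀ = P := by
    rw [← conjTranspose_eq_transpose_of_trivial]; exact hP.1.eq
  have hS₂t : S₂ᵀ = S₂ := by
    rw [← conjTranspose_eq_transpose_of_trivial]; exact hS₂.1.eq
  set G : Matrix (Fin n) (Fin n) ℝ := A + B * K with hG
  set C : Matrix (Fin n) (Fin n ⊕ Fin n) ℝ := fromCols G (B * K) with hC
  set N : Matrix (Fin n ⊕ Fin n) (Fin n ⊕ Fin n) ℝ :=
    fromBlocks (Gᵀ * P + P * G + τ • P) (P * B * K - S₂)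
      (P * B * K - S₂)ᵀ (-S₁ - 2 • S₂) with hN
  constructor
  · -- forward
    intro h
    set Q : Matrix (Fin n ⊕ Fin n) (Fin n ⊕ Fin n) ℝ := -N with hQdef
    have hQ : Q.PosDef := h
    haveI : Invertible Q := Q.invertibleOfIsUnitDet (isUnit_iff_ne_zero.mpr hQ.det_pos.ne')
    set RR : Matrix (Fin n) (Fin n) ℝ := C * Q⁻¹ * Cᵀ with hRR
    set s : ℝ := ∑ i, ∑ j, |RR i j| with hs
    have hs0 : 0 ≤ s :=
      Finset.sum_nonneg fun i _ => Finset.sum_nonneg fun j _ => abs_nonneg _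
    have hs1 : (0:ℝ) < s + 1 := by linarith
    set ε : ℝ := 2 / (s + 1) with hε
    have hε0 : 0 < ε := by positivity
    refine ⟨ε • 1, P, ?_⟩
    -- rewrite target matrix into Schur-friendly form
    have hbeq : fromCols (P - P + (ε • (1:Matrix (Fin n) (Fin n) ℝ))ᵀ * G)
        ((ε • (1:Matrix (Fin n) (Fin n) ℝ))ᵀ * (B * K)) = ε • C := by
      rw [hC, ← smul_fromColumns']
      congr 1 <;> simp [transpose_smul, Matrix.smul_mul]
    have hXeq : (-(Matrix.fromBlocks
          (-((ε • (1:Matrix (Fin n) (Fin n) ℝ)) + (ε • (1:Matrix (Fin n) (Fin n) ℝ))ᵀ))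
          (Matrix.fromCols (P - P + (ε • (1:Matrix (Fin n) (Fin n) ℝ))ᵀ * G)
            ((ε • (1:Matrix (Fin n) (Fin n) ℝ))ᵀ * (B * K)))
          (Matrix.fromRows (P - P + (ε • (1:Matrix (Fin n) (Fin n) ℝ))ᵀ * G)ᵀ
            ((ε • (1:Matrix (Fin n) (Fin n) ℝ))ᵀ * (B * K))ᵀ)
          (Matrix.fromBlocks
            (Pᵀ * G + Gᵀ * P + τ • P) (Pᵀ * (B * K) - S₂)
            (Pᵀ * (B * K) - S₂)ᵀ (-S₁ - 2 • S₂)))) =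
        fromBlocks ((2*ε) • 1) (-(ε • C)) (-(ε • C))ᵀ Q := by
      rw [fromBlocks_neg, Matrix.fromBlocks_inj]
      refine ⟨?_, ?_, ?_, ?_⟩
      · rw [transpose_smul, transpose_one, neg_neg, two_mul, add_smul]
      · rw [hbeq]
      · rw [transpose_neg, ← hbeq, transpose_fromCols]
      · rw [hQdef, hN, neg_inj, Matrix.fromBlocks_inj]
        refine ⟨?_, ?_, ?_, ?_⟩
        · rw [hPt]; abel
        · rw [hPt, Matrix.mul_assoc]
        · rw [hPt, Matrix.mul_assoc]
        · rfl
    rw [hXeq]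
    have hQt : Qᵀ = Q := by
      rw [← conjTranspose_eq_transpose_of_trivial]; exact hQ.1.eq
    haveI : Invertible ((2*ε) • (1 : Matrix (Fin n) (Fin n) ℝ)) :=
      invertibleOfRightInverse _ _ (smul_one_invertible (by positivity : (0:ℝ) < 2*ε).ne')
    rw [posDef_fromBlocks₁₁' _ _ (posDef_smul_one (by positivity : (0:ℝ) < 2*ε))]
    have hinv : ((2*ε) • (1 : Matrix (Fin n) (Fin n) ℝ))⁻¹ = (2*ε)⁻¹ • 1 :=
      smul_one_inv (by positivity : (0:ℝ) < 2*ε).ne'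
    have hsimp : (-(ε • C))ᵀ * ((2*ε) • (1 : Matrix (Fin n) (Fin n) ℝ))⁻¹ * (-(ε • C)) =
        (s+1)⁻¹ • (Cᵀ * C) := by
      rw [hinv]
      simp only [transpose_neg, transpose_smul, Matrix.neg_mul, Matrix.mul_neg, neg_neg,
        Matrix.smul_mul, Matrix.mul_smul, smul_smul, Matrix.mul_one]
      match_scalars
      rw [hε]
      field_simp
    rw [hsimp]
    haveI : Invertible ((s+1) • (1 : Matrix (Fin n) (Fin n) ℝ)) :=
      invertibleOfRightInverse _ _ (smul_one_invertible hs1.ne')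
    have h2 : (fromBlocks ((s+1) • 1) C Cᵀ Q).PosDef := by
      rw [posDef_fromBlocks₂₂' _ _ hQ]
      have hRRt : (C * Q⁻¹ * Cᵀ)ᵀ = C * Q⁻¹ * Cᵀ := by
        simp only [transpose_mul, transpose_transpose, Matrix.transpose_nonsing_inv, hQt,
          Matrix.mul_assoc]
      rw [posDef_iff_dotProduct_mulVec]
      constructor
      · show _ᴴ = _
        rw [conjTranspose_eq_transpose_of_trivial, transpose_sub, transpose_smul,
          transpose_one, hRRt]
      · intro x hx
        have hb := quad_form_le (C * Q⁻¹ * Cᵀ) x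
        rw [← hRR, ← hs] at hb
        have hxpos : (0:ℝ) < x ⬝ᵥ x :=
          lt_of_le_of_ne (Finset.sum_nonneg fun i _ => mul_self_nonneg _)
            (Ne.symm ((dotProduct_self_eq_zero (v := x)).not.mpr hx))
        have hval : star x ⬝ᵥ (((s+1) • 1 - C * Q⁻¹ * Cᵀ) *ᵥ x) =
            (s+1) * (x ⬝ᵥ x) - x ⬝ᵥ (C * Q⁻¹ * Cᵀ) *ᵥ x := by
          rw [Matrix.sub_mulVec, dotProduct_sub, Matrix.smul_mulVec, Matrix.one_mulVec,
            dotProduct_smul, star_trivial]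
          simp [smul_eq_mul]
        rw [hval]
        linarith
    have h3 := (posDef_fromBlocks₁₁' C Q (posDef_smul_one hs1)).mp h2
    have heq : Q - Cᵀ * ((s+1) • (1 : Matrix (Fin n) (Fin n) ℝ))⁻¹ * C =
        Q - (s+1)⁻¹ • (Cᵀ * C) := by
      rw [smul_one_inv hs1.ne', Matrix.mul_smul, Matrix.mul_one, Matrix.smul_mul]
    rw [heq] at h3
    exact h3
  · -- backward
    rintro ⟨X₁, X₂, h⟩
    set U : Matrix (Fin n ⊕ (Fin n ⊕ Fin n)) (Fin n ⊕ Fin n) ℝ :=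
      fromRows C 1 with hU
    have hUinj : Function.Injective U.mulVec := by
      intro a b hab
      funext i
      have := congrFun hab (Sum.inr i)
      simpa [hU, fromRows_mulVec] using this
    have key := posDef_conj_of_injective h U hUinj
    rw [Matrix.mul_neg, Matrix.neg_mul] at key
    have hkey : Uᵀ * (Matrix.fromBlocks
          (-(X₁ + X₁ᵀ))
          (Matrix.fromCols (P - X₂ + X₁ᵀ * G) (X₁ᵀ * (B * K)))
          (Matrix.fromRows (P - X₂ + X₁ᵀ * G)ᵀ (X₁ᵀ * (B * K))ᵀ)
          (Matrix.fromBlocks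
            (X₂ᵀ * G + Gᵀ * X₂ + τ • P) (X₂ᵀ * (B * K) - S₂)
            (X₂ᵀ * (B * K) - S₂)ᵀ (-S₁ - 2 • S₂))) * U = N := by
      rw [hU, hC, transpose_fromRows, transpose_one, Matrix.mul_assoc,
        fromBlocks_mul_fromRows]
      simp only [Matrix.mul_one, Matrix.one_mul, fromCols_mul_fromRows,
        transpose_fromCols, mul_fromCols, fromRows_mul, fromRows_mul_fromCols,
        Matrix.add_mul, Matrix.mul_add, fromBlocks_add, fromRows_add2, fromColumns_add2,
        fromCols_fromRows_eq_fromBlocks, hN]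
      rw [Matrix.fromBlocks_inj]
      refine ⟨?_, ?_, ?_, ?_⟩ <;>
      · simp only [Matrix.mul_add, Matrix.add_mul, Matrix.sub_mul, Matrix.mul_sub,
          Matrix.neg_mul, Matrix.mul_neg, transpose_add, transpose_sub, transpose_mul,
          transpose_transpose, transpose_neg, hPt, hS₂t, Matrix.mul_assoc]
        abel
    rw [hkey] at key
    exact key

end
end

section
/- Consider the planar system with A = [[0, 1], [0.5, 0.5]], B = (1, 1)ᵀ, K = [−0.3491, −0.7022], and the uniform quantizer with δ₁ = δ₂ = 1. For every integer k with 1 ≤ |k| ≤ 20, there is no Carathéodory solution of the closed loop ẋ = Ax + BK q(x) starting from (k,k): there exist no T > 0 and absolutely continuous φ : [0,T] → ℝ² with φ(0) = (k,k) and φ'(t) = Aφ(t) + BK q(φ(t)) for almost every t ∈ [0,T]. -/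
open MeasureTheory Set Filter Matrix

noncomputable section

/-- The closed-loop vector field `Z(x) = A x + B K q(x)` of the planar example, with
`A = [[0, 1], [0.5, 0.5]]`, `B = (1,1)ᵀ`, `K = [-0.3491, -0.7022]` and unit
quantization steps `δ₁ = δ₂ = 1`. -/
def exampleField (x : EuclideanSpace ℝ (Fin 2)) : EuclideanSpace ℝ (Fin 2) :=
  WithLp.toLp 2 ((!![0, 1; 0.5, 0.5] : Matrix (Fin 2) (Fin 2) ℝ).mulVec x +
    ((![-0.3491, -0.7022] : Fin 2 → ℝ) ⬝ᵥ quantizer (fun _ => 1) x) • (![1, 1] : Fin 2 → ℝ))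

/-! ### Auxiliary lemmas -/

lemma quantizer_neg {n : ℕ} (δ : Fin n → ℝ) (x : EuclideanSpace ℝ (Fin n)) :
    quantizer δ (-x) = -quantizer δ x := by
  ext i
  show δ i * Real.sign ((-x) i) * (⌊|(-x) i| / δ i⌋ : ℤ) = -(δ i * Real.sign (x i) * _)
  have : (-x) i = -(x i) := rfl
  rw [this, Real.sign_neg, abs_neg]
  ring

lemma exampleField_neg (x : EuclideanSpace ℝ (Fin 2)) :
    exampleField (-x) = -exampleField x := by
  unfold exampleField
  rw [quantizer_neg]
  have h1 : (!![0, 1; 0.5, 0.5] : Matrix (Fin 2) (Fin 2) ℝ).mulVec (WithLp.ofLp (-x)) =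
      -(!![0, 1; 0.5, 0.5] : Matrix (Fin 2) (Fin 2) ℝ).mulVec x := Matrix.mulVec_neg ..
  rw [h1]
  have h2 : ((![-0.3491, -0.7022] : Fin 2 → ℝ) ⬝ᵥ
      (-(quantizer (fun _ => 1) x) : EuclideanSpace ℝ (Fin 2))) =
      -((![-0.3491, -0.7022] : Fin 2 → ℝ) ⬝ᵥ quantizer (fun _ => 1) x) := by
    simp [dotProduct, Fin.sum_univ_two]
  rw [h2, neg_smul, ← WithLp.toLp_neg, neg_add]

lemma exampleField_apply0 (x : EuclideanSpace ℝ (Fin 2)) :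
    exampleField x 0 = x 1 +
      (-0.3491 * quantizer (fun _ => 1) x 0 + -0.7022 * quantizer (fun _ => 1) x 1) := by
  unfold exampleField
  simp [Matrix.mulVec, dotProduct, Fin.sum_univ_two, PiLp.add_apply, PiLp.smul_apply,
    Pi.add_apply, Pi.smul_apply]

lemma exampleField_apply1 (x : EuclideanSpace ℝ (Fin 2)) :
    exampleField x 1 = 0.5 * x 0 + 0.5 * x 1 +
      (-0.3491 * quantizer (fun _ => 1) x 0 + -0.7022 * quantizer (fun _ => 1) x 1) := by
  unfold exampleField
  simp [Matrix.mulVec, dotProduct, Fin.sum_univ_two, PiLp.add_apply, PiLp.smul_apply,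
    Pi.add_apply, Pi.smul_apply]

lemma quant_val {s : ℝ} {k : ℤ} (hk : (1:ℝ) ≤ (k:ℝ)) (h1 : (k:ℝ) - 1 < s)
    (h2 : s < (k:ℝ) + 1) :
    (1:ℝ) * Real.sign s * (⌊|s| / 1⌋ : ℤ) = if (k:ℝ) ≤ s then (k:ℝ) else (k:ℝ) - 1 := by
  have hs : 0 < s := by linarith
  rw [Real.sign_of_pos hs, abs_of_pos hs, div_one]
  by_cases hks : (k:ℝ) ≤ s
  · rw [if_pos hks]
    have : ⌊s⌋ = k := by
      rw [Int.floor_eq_iff]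
      exact ⟨hks, by exact_mod_cast h2⟩
    rw [this]; ring
  · rw [if_neg hks]
    push_neg at hks
    have : ⌊s⌋ = k - 1 := by
      rw [Int.floor_eq_iff]
      constructor
      · push_cast; linarith
      · push_cast; linarith
    rw [this]; push_cast; ring

lemma quantizer_val_of_near {x : EuclideanSpace ℝ (Fin 2)} {k : ℤ} (i : Fin 2)
    (hk : (1:ℝ) ≤ (k:ℝ)) (h1 : (k:ℝ) - 1 < x i) (h2 : x i < (k:ℝ) + 1) :
    quantizer (fun _ => 1) x i = if (k:ℝ) ≤ x i then (k:ℝ) else (k:ℝ) - 1 := by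
  show (1:ℝ) * Real.sign (x i) * (⌊|x i| / 1⌋ : ℤ) = _
  exact quant_val hk h1 h2

/-- Barrier lemma: if the primitive of `h` is positive only where `h ≤ 0` (a.e.),
it stays nonpositive. -/
lemma barrier_le {τ : ℝ} {v h : ℝ → ℝ}
    (hv : ∀ t ∈ Icc (0:ℝ) τ, v t = ∫ s in (0:ℝ)..t, h s)
    (hint : IntervalIntegrable h volume 0 τ)
    (hcont : ContinuousOn v (Icc 0 τ))
    (hae : ∀ᵐ t ∂(volume.restrict (Icc (0:ℝ) τ)), 0 < v t → h t ≤ 0) :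
    ∀ t ∈ Icc (0:ℝ) τ, v t ≤ 0 := by
  by_contra hc
  push_neg at hc
  obtain ⟨t₀, ht₀, hvt₀⟩ := hc
  have ht₀0 : (0:ℝ) ≤ t₀ := ht₀.1
  have hτ : (0:ℝ) ≤ τ := ht₀0.trans ht₀.2
  set S : Set ℝ := Icc 0 t₀ ∩ v ⁻¹' Iic 0 with hS
  have h0S : (0:ℝ) ∈ S := by
    refine ⟨⟨le_refl _, ht₀0⟩, ?_⟩
    have : v 0 = 0 := by rw [hv 0 ⟨le_refl _, hτ⟩, intervalIntegral.integral_same]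
    simp [this]
  have hbdd : BddAbove S := (bddAbove_Icc).mono inter_subset_left
  have hclosed : IsClosed S :=
    (hcont.mono (Icc_subset_Icc le_rfl ht₀.2)).preimage_isClosed_of_isClosed
      isClosed_Icc isClosed_Iic
  set t₁ := sSup S with ht₁def
  have ht₁S : t₁ ∈ S := hclosed.csSup_mem ⟨0, h0S⟩ hbdd
  have ht₁0 : 0 ≤ t₁ := ht₁S.1.1
  have ht₁t₀ : t₁ ≤ t₀ := ht₁S.1.2
  have hvt₁ : v t₁ ≤ 0 := ht₁S.2
  have hlt : t₁ < t₀ := lt_of_le_of_ne ht₁t₀ (fun he => absurd (he ▸ hvt₁) (not_le.mpr hvt₀))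
  have hpos : ∀ t ∈ Ioc t₁ t₀, 0 < v t := by
    intro t ht
    by_contra hle
    push_neg at hle
    have htS : t ∈ S := by
      rw [hS]
      exact ⟨⟨ht₁0.trans ht.1.le, ht.2⟩, hle⟩
    exact absurd (le_csSup hbdd htS) (not_le.mpr ht.1)
  have hi1 : IntervalIntegrable h volume 0 t₁ := hint.mono_set
    (by rw [uIcc_of_le ht₁0, uIcc_of_le hτ]; exact Icc_subset_Icc le_rfl (ht₁t₀.trans ht₀.2))
  have hi0 : IntervalIntegrable h volume 0 t₀ := hint.mono_set
    (by rw [uIcc_of_le ht₀0, uIcc_of_le hτ]; exact Icc_subset_Icc le_rfl ht₀.2)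
  have key : v t₀ - v t₁ = ∫ s in t₁..t₀, h s := by
    rw [hv t₀ ht₀, hv t₁ ⟨ht₁0, ht₁t₀.trans ht₀.2⟩]
    exact intervalIntegral.integral_interval_sub_left hi0 hi1
  have hneg : (∫ s in t₁..t₀, h s) ≤ 0 := by
    rw [intervalIntegral.integral_of_le hlt.le]
    have h1 : ∀ᵐ t ∂(volume.restrict (Ioc t₁ t₀)), 0 < v t → h t ≤ 0 :=
      hae.filter_mono (ae_mono (Measure.restrict_mono
        ((fun t ht => ⟨ht₁0.trans ht.1.le, ht.2.trans ht₀.2⟩ :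
          Ioc t₁ t₀ ⊆ Icc 0 τ)) le_rfl))
    have h2 : ∀ᵐ t ∂(volume.restrict (Ioc t₁ t₀)), t ∈ Ioc t₁ t₀ :=
      ae_restrict_mem measurableSet_Ioc
    have h3 : ∀ᵐ t ∂(volume.restrict (Ioc t₁ t₀)), h t ≤ 0 := by
      filter_upwards [h1, h2] with t hA hB using hA (hpos t hB)
    exact integral_nonpos_of_ae h3
  linarith

lemma barrier_ge {τ : ℝ} {v h : ℝ → ℝ}
    (hv : ∀ t ∈ Icc (0:ℝ) τ, v t = ∫ s in (0:ℝ)..t, h s)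
    (hint : IntervalIntegrable h volume 0 τ)
    (hcont : ContinuousOn v (Icc 0 τ))
    (hae : ∀ᵐ t ∂(volume.restrict (Icc (0:ℝ) τ)), v t < 0 → 0 ≤ h t) :
    ∀ t ∈ Icc (0:ℝ) τ, 0 ≤ v t := by
  have := barrier_le (v := fun t => -v t) (h := fun t => -h t)
    (fun t ht => by show -v t = _; rw [intervalIntegral.integral_neg, hv t ht])
    hint.neg hcont.neg
    (by filter_upwards [hae] with t ht hlt; simpa using ht (by linarith))
  intro t ht
  have h2 := this t ht
  simpa using h2

/-- Gronwall-type lemma: `u(t) = ∫₀ᵗ h`, `h = -u/2` a.e. implies `u ≡ 0` on `[0,τ]`, `τ ≤ 1`. -/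
lemma gronwall_zero {τ : ℝ} (hτ0 : 0 ≤ τ) (hτ1 : τ ≤ 1) {u h : ℝ → ℝ}
    (hu : ∀ t ∈ Icc (0:ℝ) τ, u t = ∫ s in (0:ℝ)..t, h s)
    (hint : IntervalIntegrable h volume 0 τ)
    (hcont : ContinuousOn u (Icc 0 τ))
    (hae : ∀ᵐ t ∂(volume.restrict (Icc (0:ℝ) τ)), h t = -(1/2) * u t) :
    ∀ t ∈ Icc (0:ℝ) τ, u t = 0 := by
  obtain ⟨t₁, ht₁, hmax⟩ := isCompact_Icc.exists_isMaxOn (nonempty_Icc.mpr hτ0)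
    (hcont.abs : ContinuousOn (fun t => |u t|) (Icc 0 τ))
  set M := |u t₁| with hMdef
  have hM0 : 0 ≤ M := abs_nonneg _
  have hbound : ∀ t ∈ Icc (0:ℝ) τ, |u t| ≤ (1/2) * M * t := by
    intro t ht
    have hit : IntervalIntegrable h volume 0 t := hint.mono_set
      (by rw [uIcc_of_le ht.1, uIcc_of_le hτ0]; exact Icc_subset_Icc le_rfl ht.2)
    have haet : ∀ᵐ x ∂(volume.restrict (Icc (0:ℝ) t)), x ∈ Icc (0:ℝ) t :=
      ae_restrict_mem measurableSet_Icc
    have hae2 : ∀ᵐ x ∂(volume.restrict (Icc (0:ℝ) t)), h x = -(1/2) * u x :=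
      hae.filter_mono (ae_mono (Measure.restrict_mono (Icc_subset_Icc le_rfl ht.2) le_rfl))
    have habs : ∀ᵐ x ∂(volume.restrict (Icc (0:ℝ) t)), h x ≤ (1/2) * M ∧ -((1/2) * M) ≤ h x := by
      filter_upwards [haet, hae2] with x hx he
      have hux : |u x| ≤ M := hmax ⟨hx.1, hx.2.trans ht.2⟩
      have := abs_le.mp hux
      constructor <;> [skip; skip] <;> rw [he] <;> nlinarith [this.1, this.2]
    have hub : (∫ s in (0:ℝ)..t, h s) ≤ ∫ _s in (0:ℝ)..t, (1/2) * M := by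
      refine intervalIntegral.integral_mono_ae_restrict ht.1 hit intervalIntegrable_const ?_
      filter_upwards [habs] with x hx using hx.1
    have hlb : (∫ _s in (0:ℝ)..t, -((1/2) * M)) ≤ ∫ s in (0:ℝ)..t, h s := by
      refine intervalIntegral.integral_mono_ae_restrict ht.1 intervalIntegrable_const hit ?_
      filter_upwards [habs] with x hx using hx.2
    rw [intervalIntegral.integral_const, smul_eq_mul] at hub hlb
    rw [hu t ht, abs_le]
    constructor <;> nlinarith
  have hMle : M ≤ (1/2) * M := by
    have h1 := hbound t₁ ht₁
    have h2 : t₁ ≤ 1 := ht₁.2.trans hτ1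
    nlinarith [ht₁.1]
  have hM : M = 0 := le_antisymm (by linarith) hM0
  intro t ht
  have h1 : |u t| ≤ M := hmax ht
  rw [hM] at h1
  exact abs_eq_zero.mp (le_antisymm h1 (abs_nonneg _))

/-- The main lemma: no Carathéodory solution from `(k,k)` for `1 ≤ k ≤ 20`. -/
lemma no_sol_pos (k : ℤ) (hk1 : 1 ≤ k) (hk2 : k ≤ 20) :
    ¬ ∃ (T : ℝ), 0 < T ∧ ∃ (φ g : ℝ → EuclideanSpace ℝ (Fin 2)),
      φ 0 = (WithLp.toLp 2 ![(k : ℝ), (k : ℝ)] : EuclideanSpace ℝ (Fin 2)) ∧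
      IntervalIntegrable g volume 0 T ∧
      (∀ t ∈ Set.Icc (0:ℝ) T, φ t = φ 0 + ∫ s in (0:ℝ)..t, g s) ∧
      (∀ᵐ t ∂(volume.restrict (Set.Icc (0:ℝ) T)), g t = exampleField (φ t)) := by
  rintro ⟨T, hT, φ, g, hφ0, hgint, hφeq, hae⟩
  have hkR1 : (1:ℝ) ≤ (k:ℝ) := by exact_mod_cast hk1
  have hkR20 : (k:ℝ) ≤ 20 := by exact_mod_cast hk2
  -- component integrability
  have hgi : ∀ i : Fin 2, IntervalIntegrable (fun s => g s i) volume 0 T := by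
    intro i
    exact ⟨(EuclideanSpace.proj i (𝕜 := ℝ)).integrable_comp hgint.1,
      (EuclideanSpace.proj i (𝕜 := ℝ)).integrable_comp hgint.2⟩
  have hgsub : ∀ t ∈ Icc (0:ℝ) T, IntervalIntegrable g volume 0 t := fun t ht =>
    hgint.mono_set (by
      rw [uIcc_of_le ht.1, uIcc_of_le (ht.1.trans ht.2)]
      exact Icc_subset_Icc le_rfl ht.2)
  have hgisub : ∀ (i : Fin 2), ∀ t ∈ Icc (0:ℝ) T,
      IntervalIntegrable (fun s => g s i) volume 0 t := fun i t ht =>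
    (hgi i).mono_set (by
      rw [uIcc_of_le ht.1, uIcc_of_le (ht.1.trans ht.2)]
      exact Icc_subset_Icc le_rfl ht.2)
  -- componentwise integral formula
  have hφi : ∀ (i : Fin 2), ∀ t ∈ Icc (0:ℝ) T, φ t i = (k:ℝ) + ∫ s in (0:ℝ)..t, g s i := by
    intro i t ht
    have h1 : φ t i = φ 0 i + (∫ s in (0:ℝ)..t, g s) i := by rw [hφeq t ht]; rfl
    have h2 : φ 0 i = (k:ℝ) := by rw [hφ0]; fin_cases i <;> simp
    have h3 : (∫ s in (0:ℝ)..t, g s) i = ∫ s in (0:ℝ)..t, g s i := by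
      have := (EuclideanSpace.proj i (𝕜 := ℝ)).intervalIntegral_comp_comm (hgsub t ht)
      simpa using this.symm
    rw [h1, h2, h3]
  -- continuity of components
  have hφcont : ∀ i : Fin 2, ContinuousOn (fun t => φ t i) (Icc (0:ℝ) T) := by
    intro i
    have hprim : ContinuousOn (fun t => (k:ℝ) + ∫ s in (0:ℝ)..t, g s i) (Icc (0:ℝ) T) := by
      have := intervalIntegral.continuousOn_primitive_interval' (hgi i)
        (left_mem_uIcc (a := (0:ℝ)) (b := T))
      rw [uIcc_of_le hT.le] at this
      exact continuousOn_const.add this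
    exact hprim.congr fun t ht => hφi i t ht
  -- the difference u = φ₀ - φ₁ satisfies Gronwall and vanishes
  set τ₁ : ℝ := min T 1 with hτ₁def
  have hτ₁pos : 0 < τ₁ := lt_min hT one_pos
  have hτ₁T : τ₁ ≤ T := min_le_left _ _
  have hsub₁ : Icc (0:ℝ) τ₁ ⊆ Icc 0 T := Icc_subset_Icc le_rfl hτ₁T
  set u : ℝ → ℝ := fun t => φ t 0 - φ t 1 with hudef
  set d : ℝ → ℝ := fun s => g s 0 - g s 1 with hddef
  have hdint : IntervalIntegrable d volume 0 T := (hgi 0).sub (hgi 1)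
  have hu : ∀ t ∈ Icc (0:ℝ) τ₁, u t = ∫ s in (0:ℝ)..t, d s := by
    intro t ht
    have ht' := hsub₁ ht
    have := intervalIntegral.integral_sub (hgisub 0 t ht') (hgisub 1 t ht')
    show φ t 0 - φ t 1 = _
    rw [hφi 0 t ht', hφi 1 t ht', this]
    ring
  have hdae : ∀ᵐ t ∂(volume.restrict (Icc (0:ℝ) τ₁)), d t = -(1/2) * u t := by
    have h1 : ∀ᵐ t ∂(volume.restrict (Icc (0:ℝ) τ₁)), g t = exampleField (φ t) :=
      hae.filter_mono (ae_mono (Measure.restrict_mono hsub₁ le_rfl))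
    filter_upwards [h1] with t hg
    have e0 := exampleField_apply0 (φ t)
    have e1 := exampleField_apply1 (φ t)
    have hg0 : g t 0 = exampleField (φ t) 0 := by rw [hg]
    have hg1 : g t 1 = exampleField (φ t) 1 := by rw [hg]
    show g t 0 - g t 1 = -(1/2) * (φ t 0 - φ t 1)
    rw [hg0, hg1, e0, e1]
    ring
  have huzero : ∀ t ∈ Icc (0:ℝ) τ₁, u t = 0 :=
    gronwall_zero hτ₁pos.le (min_le_right _ _) hu
      (hdint.mono_set (by rw [uIcc_of_le hτ₁pos.le, uIcc_of_le hT.le]; exact hsub₁))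
      (((hφcont 0).sub (hφcont 1)).mono hsub₁) hdae
  -- choose τ ≤ τ₁ with |φ t 0 - k| < 1/100 on [0,τ]
  have hcont0 : ContinuousWithinAt (fun t => φ t 0) (Icc (0:ℝ) T) 0 :=
    (hφcont 0) 0 ⟨le_refl _, hT.le⟩
  have hφ00 : φ 0 0 = (k:ℝ) := by rw [hφ0]; simp
  obtain ⟨δ, hδpos, hδ⟩ := Metric.continuousWithinAt_iff.mp hcont0 (1/100) (by norm_num)
  set τ : ℝ := min τ₁ (δ/2) with hτdef
  have hτpos : 0 < τ := lt_min hτ₁pos (by linarith)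
  have hττ₁ : τ ≤ τ₁ := min_le_left _ _
  have hτT : τ ≤ T := hττ₁.trans hτ₁T
  have hsubτ : Icc (0:ℝ) τ ⊆ Icc 0 T := Icc_subset_Icc le_rfl hτT
  have hsubτ₁ : Icc (0:ℝ) τ ⊆ Icc 0 τ₁ := Icc_subset_Icc le_rfl hττ₁
  have hnear : ∀ t ∈ Icc (0:ℝ) τ, |φ t 0 - (k:ℝ)| < 1/100 := by
    intro t ht
    have h1 : t ∈ Icc (0:ℝ) T := hsubτ ht
    have h2 : dist t 0 < δ := by
      rw [Real.dist_eq, sub_zero, abs_of_nonneg ht.1]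
      have : t ≤ δ/2 := ht.2.trans (min_le_right _ _)
      linarith
    have := hδ h1 h2
    rwa [Real.dist_eq, hφ00] at this
  -- the scalar equation for v = φ·0 - k
  set v : ℝ → ℝ := fun t => φ t 0 - (k:ℝ) with hvdef
  set a : ℝ → ℝ := fun s => g s 0 with hadef
  have haint : IntervalIntegrable a volume 0 τ :=
    (hgi 0).mono_set (by rw [uIcc_of_le hτpos.le, uIcc_of_le hT.le]; exact hsubτ)
  have hv : ∀ t ∈ Icc (0:ℝ) τ, v t = ∫ s in (0:ℝ)..t, a s := by
    intro t ht
    show φ t 0 - (k:ℝ) = _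
    rw [hφi 0 t (hsubτ ht)]
    ring
  have hvcont : ContinuousOn v (Icc (0:ℝ) τ) :=
    (((hφcont 0).mono hsubτ).sub continuousOn_const)
  -- key a.e. description of a on [0,τ]
  have hkey : ∀ᵐ t ∂(volume.restrict (Icc (0:ℝ) τ)),
      a t = φ t 0 - 1.0513 * (if (k:ℝ) ≤ φ t 0 then (k:ℝ) else (k:ℝ) - 1) := by
    have h1 : ∀ᵐ t ∂(volume.restrict (Icc (0:ℝ) τ)), g t = exampleField (φ t) :=
      hae.filter_mono (ae_mono (Measure.restrict_mono hsubτ le_rfl))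
    have h2 : ∀ᵐ t ∂(volume.restrict (Icc (0:ℝ) τ)), t ∈ Icc (0:ℝ) τ :=
      ae_restrict_mem measurableSet_Icc
    filter_upwards [h1, h2] with t hg ht
    have hnt := hnear t ht
    have habs := abs_lt.mp hnt
    have hdiag : φ t 1 = φ t 0 := by
      have := huzero t (hsubτ₁ ht)
      have h3 : φ t 0 - φ t 1 = 0 := this
      linarith
    have hb1 : (k:ℝ) - 1 < φ t 0 := by linarith
    have hb2 : φ t 0 < (k:ℝ) + 1 := by linarith
    have hq0 : quantizer (fun _ => 1) (φ t) 0 =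
        if (k:ℝ) ≤ φ t 0 then (k:ℝ) else (k:ℝ) - 1 :=
      quantizer_val_of_near 0 hkR1 hb1 hb2
    have hq1 : quantizer (fun _ => 1) (φ t) 1 =
        if (k:ℝ) ≤ φ t 0 then (k:ℝ) else (k:ℝ) - 1 := by
      have := quantizer_val_of_near (x := φ t) 1 hkR1 (by rw [hdiag]; exact hb1)
        (by rw [hdiag]; exact hb2)
      rwa [hdiag] at this
    have hg0 : g t 0 = exampleField (φ t) 0 := by rw [hg]
    show g t 0 = _
    rw [hg0, exampleField_apply0, hq0, hq1, hdiag]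
    ring
  -- barrier arguments: v ≤ 0 and v ≥ 0 on [0,τ]
  have hle : ∀ t ∈ Icc (0:ℝ) τ, v t ≤ 0 := by
    refine barrier_le hv haint hvcont ?_
    have h2 : ∀ᵐ t ∂(volume.restrict (Icc (0:ℝ) τ)), t ∈ Icc (0:ℝ) τ :=
      ae_restrict_mem measurableSet_Icc
    filter_upwards [hkey, h2] with t hk' ht hpos
    have hnt := abs_lt.mp (hnear t ht)
    have hklt : (k:ℝ) ≤ φ t 0 := by
      show (k:ℝ) ≤ φ t 0
      have : 0 < φ t 0 - (k:ℝ) := hpos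
      linarith
    rw [hk', if_pos hklt]
    linarith [hnt.2]
  have hge : ∀ t ∈ Icc (0:ℝ) τ, 0 ≤ v t := by
    refine barrier_ge hv haint hvcont ?_
    have h2 : ∀ᵐ t ∂(volume.restrict (Icc (0:ℝ) τ)), t ∈ Icc (0:ℝ) τ :=
      ae_restrict_mem measurableSet_Icc
    filter_upwards [hkey, h2] with t hk' ht hneg
    have hnt := abs_lt.mp (hnear t ht)
    have hklt : ¬ ((k:ℝ) ≤ φ t 0) := by
      push_neg
      have : φ t 0 - (k:ℝ) < 0 := hneg
      linarith
    rw [hk', if_neg hklt]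
    push_neg at hklt
    linarith [hnt.1]
  have hvzero : ∀ t ∈ Icc (0:ℝ) τ, v t = 0 := fun t ht =>
    le_antisymm (hle t ht) (hge t ht)
  -- final contradiction: on [0,τ] the field is the constant -0.0513 k ≠ 0
  have haconst : ∀ᵐ t ∂(volume.restrict (Icc (0:ℝ) τ)), a t ≤ -0.0513 * (k:ℝ) := by
    have h2 : ∀ᵐ t ∂(volume.restrict (Icc (0:ℝ) τ)), t ∈ Icc (0:ℝ) τ :=
      ae_restrict_mem measurableSet_Icc
    filter_upwards [hkey, h2] with t hk' ht
    have hv0 : φ t 0 - (k:ℝ) = 0 := hvzero t ht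
    have hφt : φ t 0 = (k:ℝ) := by linarith
    rw [hk', hφt, if_pos (le_refl _)]
    ring_nf
    linarith
  have hfin : v τ ≤ -0.0513 * (k:ℝ) * τ := by
    have h1 : (∫ s in (0:ℝ)..τ, a s) ≤ ∫ _s in (0:ℝ)..τ, -0.0513 * (k:ℝ) :=
      intervalIntegral.integral_mono_ae_restrict hτpos.le haint
        intervalIntegrable_const haconst
    rw [intervalIntegral.integral_const, smul_eq_mul] at h1
    rw [hv τ ⟨hτpos.le, le_refl _⟩]
    calc (∫ s in (0:ℝ)..τ, a s) ≤ (τ - 0) * (-0.0513 * (k:ℝ)) := h1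
    _ = -0.0513 * (k:ℝ) * τ := by ring
  have hvτ : v τ = 0 := hvzero τ ⟨hτpos.le, le_refl _⟩
  have hkpos : (0:ℝ) < (k:ℝ) := by linarith
  have hprod : (0:ℝ) < (k:ℝ) * τ := mul_pos hkpos hτpos
  have hfin' : (0:ℝ) ≤ -0.0513 * ((k:ℝ) * τ) := by
    calc (0:ℝ) = v τ := hvτ.symm
    _ ≤ -0.0513 * (k:ℝ) * τ := hfin
    _ = -0.0513 * ((k:ℝ) * τ) := by ring
  have hlast : (0:ℝ) < 0.0513 * ((k:ℝ) * τ) :=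
    mul_pos (by norm_num) hprod
  linarith [hfin', hlast]

/-- For every integer `k` with `1 ≤ |k| ≤ 20` there is no Carathéodory
solution of the quantized closed loop `ẋ = Ax + BK q(x)` starting from `(k, k)`: there
are no `T > 0` and absolutely continuous `φ : [0, T] → ℝ²` (written as an indefinite
integral of an integrable `g` with `g t = Z (φ t)` a.e.) with `φ 0 = (k, k)`. -/
theorem no_caratheodory_solution (k : ℤ) (hk1 : 1 ≤ |k|) (hk2 : |k| ≤ 20) :
    ¬ ∃ (T : ℝ), 0 < T ∧ ∃ (φ g : ℝ → EuclideanSpace ℝ (Fin 2)),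
      φ 0 = (WithLp.toLp 2 ![(k : ℝ), (k : ℝ)] : EuclideanSpace ℝ (Fin 2)) ∧
      IntervalIntegrable g volume 0 T ∧
      (∀ t ∈ Set.Icc (0:ℝ) T, φ t = φ 0 + ∫ s in (0:ℝ)..t, g s) ∧
      (∀ᵐ t ∂(volume.restrict (Set.Icc (0:ℝ) T)), g t = exampleField (φ t)) := by
  rcases le_or_gt 0 k with hk | hk
  · rw [abs_of_nonneg hk] at hk1 hk2
    exact no_sol_pos k hk1 hk2
  · rw [abs_of_neg hk] at hk1 hk2
    rintro ⟨T, hT, φ, g, hφ0, hgint, hφeq, hae⟩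
    refine no_sol_pos (-k) hk1 hk2 ⟨T, hT, fun t => -φ t, fun t => -g t, ?_, hgint.neg, ?_, ?_⟩
    · show -φ 0 = _
      rw [hφ0]
      ext i
      show -((![(k:ℝ), (k:ℝ)] : Fin 2 → ℝ) i) = (![((-k : ℤ):ℝ), ((-k : ℤ):ℝ)] : Fin 2 → ℝ) i
      fin_cases i <;> push_cast <;> simp
    · intro t ht
      show -φ t = -φ 0 + ∫ s in (0:ℝ)..t, -g s
      rw [intervalIntegral.integral_neg, hφeq t ht]
      abel
    · filter_upwards [hae] with t hg
      show -g t = exampleField (-φ t)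
      rw [exampleField_neg, hg]

end
end

section
/- Consider the planar system with A = [[0, 1], [0.5, 0.5]], B = (1, 1)ᵀ, K = [−0.3491, −0.7022], the uniform quantizer with δ₁ = δ₂ = 1, and Z(x) = Ax + BK q(x). For every integer k with 1 ≤ |k| ≤ 20, the point (k,k) is a Krasovskii equilibrium: 0 ∈ K[Z]((k,k)), so the constant function φ(t) = (k,k) on [0,∞) is a (maximal, complete) Krasovskii solution of ẋ = Z(x). -/
open MeasureTheory Set Filter Matrix

noncomputable section

abbrev En (n : ℕ) := EuclideanSpace ℝ (Fin n)

/-- `φ` is an (absolutely continuous) solution of the differential inclusion `ẋ ∈ F x`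
on the interval `dom ⊆ [0, ∞)` containing `0`: it is an indefinite integral of a
locally integrable function `g` that belongs to `F (φ t)` for almost every `t ∈ dom`. -/
structure IsSolutionOn {n : ℕ} (F : En n → Set (En n)) (φ : ℝ → En n) (dom : Set ℝ) : Prop where
  ord : dom.OrdConnected
  subset_Ici : dom ⊆ Set.Ici (0 : ℝ)
  zero_mem : (0 : ℝ) ∈ dom
  abscont : ∃ g : ℝ → En n,
      (∀ t ∈ dom, IntervalIntegrable g volume 0 t) ∧
      (∀ t ∈ dom, φ t = φ 0 + ∫ s in (0:ℝ)..t, g s) ∧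
      (∀ᵐ t ∂(volume.restrict dom), g t ∈ F (φ t))

/-- A solution is maximal if it cannot be extended to a solution on a strictly larger
interval. -/
def IsMaximalSolution {n : ℕ} (F : En n → Set (En n)) (φ : ℝ → En n) (dom : Set ℝ) : Prop :=
  IsSolutionOn F φ dom ∧
    ∀ (ψ : ℝ → En n) (dom' : Set ℝ), IsSolutionOn F ψ dom' →
      dom ⊆ dom' → (∀ t ∈ dom, ψ t = φ t) → dom' ⊆ dom

/-- Class `K∞` functions. -/
structure IsClassKInf (α : ℝ → ℝ) : Prop where
  continuous : Continuous α
  map_zero : α 0 = 0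
  strictMono : StrictMonoOn α (Set.Ici 0)
  tendsto_atTop : Tendsto α atTop atTop

/-- Uniform global stability of a set `A`. -/
def UniformlyGloballyStable {n : ℕ} (F : En n → Set (En n)) (A : Set (En n)) : Prop :=
  ∃ α : ℝ → ℝ, IsClassKInf α ∧
    ∀ (φ : ℝ → En n) (dom : Set ℝ), IsSolutionOn F φ dom →
      ∀ t ∈ dom, Metric.infDist (φ t) A ≤ α (Metric.infDist (φ 0) A)

/-- Uniform global attractivity of a set `A`: every maximal solution is complete
(its domain is unbounded above) and solutions converge to `A` uniformly over
bounded sets of initial conditions. -/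
def UniformlyGloballyAttractive {n : ℕ} (F : En n → Set (En n)) (A : Set (En n)) : Prop :=
  (∀ (φ : ℝ → En n) (dom : Set ℝ), IsMaximalSolution F φ dom → ¬ BddAbove dom) ∧
    ∀ ε > (0:ℝ), ∀ μ > (0:ℝ), ∃ T > (0:ℝ),
      ∀ (φ : ℝ → En n) (dom : Set ℝ), IsSolutionOn F φ dom →
        Metric.infDist (φ 0) A ≤ μ → ∀ t ∈ dom, T ≤ t → Metric.infDist (φ t) A ≤ ε

/-- Uniform global asymptotic stability. -/
def UGAS {n : ℕ} (F : En n → Set (En n)) (A : Set (En n)) : Prop :=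
  UniformlyGloballyStable F A ∧ UniformlyGloballyAttractive F A

/-- Strong forward invariance of `A`. -/
def StronglyForwardInvariant {n : ℕ} (F : En n → Set (En n)) (A : Set (En n)) : Prop :=
  (∀ (φ : ℝ → En n) (dom : Set ℝ), IsMaximalSolution F φ dom → ¬ BddAbove dom) ∧
    ∀ (φ : ℝ → En n) (dom : Set ℝ), IsSolutionOn F φ dom → φ 0 ∈ A → ∀ t ∈ dom, φ t ∈ A

/-- Outer semicontinuity of a set-valued map. -/
def OuterSC {n : ℕ} (F : En n → Set (En n)) : Prop :=
  ∀ (x y : En n) (u v : ℕ → En n), Tendsto u atTop (nhds x) → Tendsto v atTop (nhds y) →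
    (∀ k, v k ∈ F (u k)) → y ∈ F x

/-- `F` satisfies the basic conditions: it is outer semicontinuous and has nonempty,
convex, bounded values. -/
def BasicConditions {n : ℕ} (F : En n → Set (En n)) : Prop :=
  OuterSC F ∧ ∀ x, (F x).Nonempty ∧ Convex ℝ (F x) ∧ Bornology.IsBounded (F x)

lemma exampleField_diag (a : ℝ) :
    exampleField (WithLp.toLp 2 ![a, a]) = (a - 1.0513 * Real.sign a * (⌊|a|⌋ : ℤ)) • (WithLp.toLp 2 ![1, 1] : En 2) := by
  ext i
  fin_cases i <;>
  · simp [exampleField, quantizer, Matrix.mulVec, dotProduct, Fin.sum_univ_two,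
      PiLp.add_apply, PiLp.smul_apply, Matrix.vecHead, Matrix.vecTail, Pi.smul_apply]
    ring

lemma zero_mem_ch {S : Set (En 2)} {c d : ℝ} (hc : c < 0) (hd : 0 < d)
    (h1 : c • (WithLp.toLp 2 ![1,1] : En 2) ∈ S) (h2 : d • (WithLp.toLp 2 ![1,1] : En 2) ∈ S) :
    (0 : En 2) ∈ convexHull ℝ S := by
  have hcd : 0 < d - c := by linarith
  have := (convex_convexHull ℝ S) (subset_convexHull ℝ S h1) (subset_convexHull ℝ S h2)
    (by positivity : (0:ℝ) ≤ d / (d - c))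
    (div_nonneg (by linarith) hcd.le : (0:ℝ) ≤ -c / (d - c))
    (by field_simp; ring)
  rw [smul_smul, smul_smul, ← add_smul] at this
  have hz : d / (d - c) * c + -c / (d - c) * d = 0 := by field_simp; ring
  rwa [hz, zero_smul] at this

lemma mem_cb (δ ε a b : ℝ) (hδ : 0 < δ) (hεδ : ε ≤ δ/2) (hε0 : 0 ≤ ε) (hab : |a - b| ≤ ε) :
    (WithLp.toLp 2 ![a, a] : En 2) ∈
      @Metric.closedBall (En 2) (PiLp.instPseudoMetricSpace 2 (fun _ : Fin 2 => ℝ)) (WithLp.toLp 2 ![b, b]) δ := by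
  refine (@Metric.mem_closedBall (En 2) (PiLp.instPseudoMetricSpace 2 (fun _ : Fin 2 => ℝ)) _ _ _).mpr ?_
  rw [EuclideanSpace.dist_eq]
  have e : ∀ i : Fin 2, dist ((WithLp.toLp 2 ![a,a] : En 2) i) ((WithLp.toLp 2 ![b,b] : En 2) i) = |a - b| := by
    intro i; fin_cases i <;> simp [Real.dist_eq]
  rw [Fin.sum_univ_two, e 0, e 1]
  calc Real.sqrt (|a - b|^2 + |a - b|^2) ≤ Real.sqrt (δ^2) := by
        apply Real.sqrt_le_sqrt
        have := abs_nonneg (a - b)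
        nlinarith
    _ = δ := Real.sqrt_sq hδ.le

lemma zero_mem_kras (k : ℤ) (hk1 : 1 ≤ |k|) (hk2 : |k| ≤ 20) :
    (0 : En 2) ∈ kras exampleField (WithLp.toLp 2 ![(k : ℝ), (k : ℝ)] : En 2) := by
  rw [kras]
  simp only [Set.mem_iInter]
  intro δ hδ
  apply subset_closure
  set ε : ℝ := min (δ/2) (1/100) with hεdef
  have hε0 : 0 < ε := lt_min (by linarith) (by norm_num)
  have hε1 : ε ≤ 1/100 := min_le_right _ _
  have hεδ : ε ≤ δ/2 := min_le_left _ _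
  rcases le_or_gt 1 k with hk | hk
  · -- k ≥ 1
    have hkr : (1:ℝ) ≤ (k:ℝ) := by exact_mod_cast hk
    have hkr20 : (k:ℝ) ≤ 20 := by
      have : k ≤ 20 := le_trans (le_abs_self k) hk2
      exact_mod_cast this
    -- value at (k,k)
    have hvk : exampleField (WithLp.toLp 2 ![(k:ℝ), (k:ℝ)]) = (-(0.0513) * (k:ℝ)) • (WithLp.toLp 2 ![1,1] : En 2) := by
      rw [exampleField_diag]
      congr 1
      rw [Real.sign_of_pos (by linarith), abs_of_pos (by linarith), Int.floor_intCast]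
      ring
    -- value at (k-ε, k-ε)
    have hfloor : ⌊|(k:ℝ) - ε|⌋ = k - 1 := by
      rw [abs_of_pos (by linarith)]
      rw [Int.floor_eq_iff]
      push_cast
      constructor <;> linarith
    have hvε : exampleField (WithLp.toLp 2 ![(k:ℝ) - ε, (k:ℝ) - ε])
        = (((k:ℝ) - ε) - 1.0513 * ((k:ℝ) - 1)) • (WithLp.toLp 2 ![1,1] : En 2) := by
      rw [exampleField_diag]
      congr 1
      rw [Real.sign_of_pos (by linarith), hfloor]
      push_cast
      ring
    refine zero_mem_ch (c := -(0.0513) * (k:ℝ)) (d := ((k:ℝ) - ε) - 1.0513 * ((k:ℝ) - 1))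
      (by nlinarith) (by nlinarith) ?_ ?_
    · exact ⟨_, Metric.mem_closedBall_self hδ.le, hvk⟩
    · exact ⟨_, mem_cb δ ε _ _ hδ hεδ hε0.le (by rw [abs_of_nonpos (by linarith)]; linarith), hvε⟩
  · -- k ≤ -1
    have h0 : k ≠ 0 := by intro h; simp [h] at hk1
    have hk' : k ≤ -1 := by omega
    have hkr : (k:ℝ) ≤ -1 := by exact_mod_cast hk'
    have hkr20 : (-20:ℝ) ≤ (k:ℝ) := by
      have : -20 ≤ k := (abs_le.mp hk2).1
      exact_mod_cast this
    have hvk : exampleField (WithLp.toLp 2 ![(k:ℝ), (k:ℝ)]) = (-(0.0513) * (k:ℝ)) • (WithLp.toLp 2 ![1,1] : En 2) := by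
      rw [exampleField_diag]
      congr 1
      rw [Real.sign_of_neg (by linarith), abs_of_neg (by linarith)]
      rw [show -(k:ℝ) = ((-k : ℤ) : ℝ) by push_cast; ring, Int.floor_intCast]
      push_cast
      ring
    have hfloor : ⌊|(k:ℝ) + ε|⌋ = -k - 1 := by
      rw [abs_of_neg (by linarith)]
      rw [Int.floor_eq_iff]
      push_cast
      constructor <;> linarith
    have hvε : exampleField (WithLp.toLp 2 ![(k:ℝ) + ε, (k:ℝ) + ε])
        = (((k:ℝ) + ε) - 1.0513 * ((k:ℝ) + 1)) • (WithLp.toLp 2 ![1,1] : En 2) := by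
      rw [exampleField_diag]
      congr 1
      rw [Real.sign_of_neg (by linarith), hfloor]
      push_cast
      ring
    refine zero_mem_ch (c := ((k:ℝ) + ε) - 1.0513 * ((k:ℝ) + 1)) (d := -(0.0513) * (k:ℝ))
      (by nlinarith) (by nlinarith) ?_ ?_
    · exact ⟨_, mem_cb δ ε _ _ hδ hεδ hε0.le (by rw [abs_of_nonneg (by linarith)]; linarith), hvε⟩
    · exact ⟨_, Metric.mem_closedBall_self hδ.le, hvk⟩

/-- For every integer `k` with `1 ≤ |k| ≤ 20` the point `(k, k)` is a
Krasovskii equilibrium of the quantized closed loop: `0 ∈ K[Z]((k,k))`, and hence the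
constant function `φ(t) = (k, k)` on `[0, ∞)` is a maximal, complete Krasovskii solution
of `ẋ = Z(x)`. -/
theorem krasovskii_equilibrium (k : ℤ) (hk1 : 1 ≤ |k|) (hk2 : |k| ≤ 20) :
    (0 : En 2) ∈ kras exampleField (WithLp.toLp 2 ![(k : ℝ), (k : ℝ)] : En 2) ∧
    IsMaximalSolution (kras exampleField)
      (fun _ : ℝ => (WithLp.toLp 2 ![(k : ℝ), (k : ℝ)] : En 2)) (Set.Ici 0) ∧
    ¬ BddAbove (Set.Ici (0:ℝ)) := by
  have hmem := zero_mem_kras k hk1 hk2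
  refine ⟨hmem, ⟨?_, ?_⟩, not_bddAbove_Ici _⟩
  · refine ⟨Set.ordConnected_Ici, subset_rfl, Set.self_mem_Ici, 0, ?_, ?_, ?_⟩
    · intro t _; exact intervalIntegrable_const
    · intro t _; simp
    · filter_upwards with t using hmem
  · intro ψ dom' h _ _
    exact h.subset_Ici


end
end

section
/- Consider the planar system with A = [[0, 1], [0.5, 0.5]], B = (1, 1)ᵀ, K = [−0.3491, −0.7022], and the uniform quantizer with δ₁ = δ₂ = 1. Let W(x) = ½(x₁ − x₂)² and Q = {x ∈ ℝ² : x₁ = x₂}. Then for every x ∈ ℝ², ⟨∇W(x), Ax + BK q(x)⟩ = −½(x₁ − x₂)² = −dist(x, Q)², so the quantized vector field strictly decreases the squared distance to the diagonal Q off Q. -/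
open MeasureTheory Set Filter Matrix

noncomputable section

/-- `W(x) = ½ (x₁ - x₂)²`, the squared distance to the diagonal. -/
def Wfun (x : EuclideanSpace ℝ (Fin 2)) : ℝ := (1/2) * (x 0 - x 1)^2

/-- The diagonal `Q = {x ∈ ℝ² | x₁ = x₂}`. -/
def diagQ : Set (EuclideanSpace ℝ (Fin 2)) := {x | x 0 = x 1}

lemma hasGradW (x : EuclideanSpace ℝ (Fin 2)) :
    HasGradientAt Wfun
      ((WithLp.equiv 2 (Fin 2 → ℝ)).symm ![x 0 - x 1, x 1 - x 0]) x := by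
  rw [hasGradientAt_iff_hasFDerivAt]
  have h0 : HasFDerivAt (fun y : EuclideanSpace ℝ (Fin 2) => y 0 - y 1)
      ((EuclideanSpace.proj 0 : EuclideanSpace ℝ (Fin 2) →L[ℝ] ℝ) - EuclideanSpace.proj 1) x :=
    ((EuclideanSpace.proj 0 : EuclideanSpace ℝ (Fin 2) →L[ℝ] ℝ).hasFDerivAt).sub
      ((EuclideanSpace.proj 1 : EuclideanSpace ℝ (Fin 2) →L[ℝ] ℝ).hasFDerivAt)
  have h := (h0.mul h0).const_mul (1/2 : ℝ)
  have hW : (fun y : EuclideanSpace ℝ (Fin 2) => (1/2 : ℝ) * ((y 0 - y 1) * (y 0 - y 1))) = Wfun := by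
    funext y; simp [Wfun]; ring
  simp only [Pi.mul_apply] at h
  rw [hW] at h
  convert h using 1
  · rfl
  refine ContinuousLinearMap.ext fun v => ?_
  simp [InnerProductSpace.toDual, PiLp.inner_apply, Fin.sum_univ_two, WithLp.equiv_symm_apply, PiLp.toLp_apply, Matrix.cons_val_zero, Matrix.cons_val_one, Matrix.head_cons]
  ring

open RealInnerProductSpace in
/-- Along the quantized closed-loop vector field the squared distance
to the diagonal decreases: for every `x`,
`⟨∇W(x), Ax + BK q(x)⟩ = -½ (x₁ - x₂)² = -dist(x, Q)²`. -/
theorem diag_distance_decrease (x : EuclideanSpace ℝ (Fin 2)) :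
    ⟪gradient Wfun x, exampleField x⟫ = -(1/2) * (x 0 - x 1)^2 ∧
    -(1/2) * (x 0 - x 1)^2 = -(Metric.infDist x diagQ)^2 := by
  constructor
  · rw [(hasGradW x).gradient]
    simp [PiLp.inner_apply, Fin.sum_univ_two, WithLp.equiv_symm_apply, PiLp.toLp_apply, exampleField,
      quantizer, Matrix.mulVec, dotProduct, PiLp.add_apply, PiLp.smul_apply]
    ring
  · have key : Metric.infDist x diagQ = Real.sqrt ((x 0 - x 1)^2 / 2) := by
      set p : EuclideanSpace ℝ (Fin 2) :=
        (WithLp.equiv 2 (Fin 2 → ℝ)).symm ![(x 0 + x 1)/2, (x 0 + x 1)/2] with hpdef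
      have hp : p ∈ diagQ := by simp [diagQ, hpdef, WithLp.equiv_symm_apply, PiLp.toLp_apply]
      have hdist : dist x p = Real.sqrt ((x 0 - x 1)^2 / 2) := by
        rw [EuclideanSpace.dist_eq]
        congr 1
        simp [Fin.sum_univ_two, hpdef, WithLp.equiv_symm_apply, PiLp.toLp_apply, Real.dist_eq, sq_abs]
        ring
      apply le_antisymm
      · rw [← hdist]; exact Metric.infDist_le_dist_of_mem hp
      · by_contra hlt
        push_neg at hlt
        obtain ⟨y, hy, hylt⟩ := (Metric.infDist_lt_iff ⟨p, hp⟩).1 hlt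
        have hy' : y 0 = y 1 := hy
        have hge : Real.sqrt ((x 0 - x 1)^2/2) ≤ dist x y := by
          rw [EuclideanSpace.dist_eq]
          apply Real.sqrt_le_sqrt
          simp only [Fin.sum_univ_two, Real.dist_eq, sq_abs]
          rw [hy']
          nlinarith [sq_nonneg (x 0 + x 1 - 2 * y 1)]
        linarith
    rw [key, Real.sq_sqrt (by positivity)]
    ring


end
end
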